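/- arXiv:1608.01672 — 2 statements merged into one kernel-verified Lean document; each statement's English description precedes it below -/
import Mathlib

section
/- Let A be a unital C*-algebra, M a Hilbert A-module, H and K Hilbert spaces, φ : A → L(H) a completely positive map, and Φ : M → L(H,K) a φ-completely positive map, i.e., Φ(x)*Φ(y) = φ(⟨x,y⟩) for all x, y ∈ M. Let (π, H^Φ, S) be the minimal Stinespring dilation of φ. Then there exists a unique continuous linear map Π : M → L(H^Φ, K) such that Π(x)(π(a)Sξ) = Φ(xa)ξ for all x ∈ M, a ∈ A, ξ ∈ H, and moreover ‖Π(x)η‖² ≤ ‖π(⟨x,x⟩)‖ · ‖η‖² for η in the span of π(A)SH. -/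
/-! For fixed `x`, the Gram identity `⟪Φ(xa)ξ, Φ(xb)ζ⟫ = ⟪π(a)Sξ, π⟨x,x⟩ π(b)Sζ⟫` shows that
`Σ π(aᵢ)Sξᵢ ↦ Σ Φ(xaᵢ)ξᵢ` is well defined on the span of `π(A)SH` and bounded there by
`‖π⟨x,x⟩‖^½ ≤ ‖x‖`. Minimality makes that span dense, so the map extends uniquely to `H₁`,
and uniqueness of the extension makes it linear in `x`. -/

open ContinuousLinearMap

noncomputable section

def IsPosMat {R : Type*} [NonUnitalSemiring R] [StarRing R] {n : ℕ}
    (M : Matrix (Fin n) (Fin n) R) : Prop :=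
  ∃ B : Matrix (Fin n) (Fin n) R, M = B.conjTranspose * B

def IsCPFun {A B : Type*} [NonUnitalSemiring A] [StarRing A]
    [NonUnitalSemiring B] [StarRing B] (f : A → B) : Prop :=
  ∀ (m : ℕ) (a : Matrix (Fin m) (Fin m) A), IsPosMat a → IsPosMat (a.map f)

open scoped InnerProductSpace

section Gram

variable {𝕜 ι E F : Type*} [RCLike 𝕜]
  [NormedAddCommGroup E] [InnerProductSpace 𝕜 E] [NormedAddCommGroup F] [InnerProductSpace 𝕜 F]

theorem inner_linearCombination_eq_of_inner_eq {v : ι → E} {u : ι → F} {T : E →L[𝕜] E}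
    (h : ∀ i j, ⟪u i, u j⟫_𝕜 = ⟪v i, T (v j)⟫_𝕜) (w w' : ι →₀ 𝕜) :
    ⟪Finsupp.linearCombination 𝕜 u w, Finsupp.linearCombination 𝕜 u w'⟫_𝕜 =
      ⟪Finsupp.linearCombination 𝕜 v w, T (Finsupp.linearCombination 𝕜 v w')⟫_𝕜 := by
  simp only [Finsupp.linearCombination_apply, Finsupp.sum, map_sum, map_smul, sum_inner,
    inner_sum, inner_smul_left, inner_smul_right, h]

theorem norm_sq_le_of_inner_self_eq {x : E} {y : F} {T : E →L[𝕜] E}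
    (h : ⟪y, y⟫_𝕜 = ⟪x, T x⟫_𝕜) : ‖y‖ ^ 2 ≤ ‖T‖ * ‖x‖ ^ 2 :=
  calc ‖y‖ ^ 2 = RCLike.re ⟪x, T x⟫_𝕜 := by rw [← h, inner_self_eq_norm_sq]
    _ ≤ ‖x‖ * ‖T x‖ := re_inner_le_norm _ _
    _ ≤ ‖x‖ * (‖T‖ * ‖x‖) := by gcongr; exact T.le_opNorm x
    _ = ‖T‖ * ‖x‖ ^ 2 := by ring

end Gram

theorem LinearMap.exists_continuous_extend_of_norm_le {𝕜 M V E G : Type*} [NontriviallyNormedField 𝕜]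
    [SeminormedAddCommGroup M] [NormedSpace 𝕜 M] [AddCommGroup V] [Module 𝕜 V]
    [SeminormedAddCommGroup E] [NormedSpace 𝕜 E] [NormedAddCommGroup G] [NormedSpace 𝕜 G]
    [CompleteSpace G] (F : M →ₗ[𝕜] V →ₗ[𝕜] G) {e : V →ₗ[𝕜] E} (he : DenseRange e)
    {C : ℝ} (hC : 0 ≤ C) (hF : ∀ x w, ‖F x w‖ ≤ C * ‖x‖ * ‖e w‖) :
    ∃ P : M →L[𝕜] E →L[𝕜] G, ∀ x w, P x (e w) = F x w := by
  have hbound (x : M) : ∃ C', ∀ w, ‖F x w‖ ≤ C' * ‖e w‖ := ⟨_, hF x⟩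
  have hext (x : M) (w : V) : (F x).extendOfNorm e (e w) = F x w :=
    LinearMap.extendOfNorm_eq he (hbound x) w
  let P : M →ₗ[𝕜] E →L[𝕜] G :=
    { toFun := fun x => (F x).extendOfNorm e
      map_add' := fun x y => LinearMap.extendOfNorm_unique he _ (hF (x + y)) _ <|
        LinearMap.ext fun w => by simp [hext]
      map_smul' := fun c x => LinearMap.extendOfNorm_unique he _ (hF (c • x)) _ <|
        LinearMap.ext fun w => by simp [hext] }
  refine ⟨P.mkContinuous C fun x => ?_, hext⟩
  exact LinearMap.opNorm_extendOfNorm_le he (by positivity) (hF x)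

theorem inner_apply_eq_of_adjoint_comp_eq {𝕜 H K H₁ : Type*} [RCLike 𝕜]
    [NormedAddCommGroup H] [InnerProductSpace 𝕜 H] [CompleteSpace H]
    [NormedAddCommGroup K] [InnerProductSpace 𝕜 K] [CompleteSpace K]
    [NormedAddCommGroup H₁] [InnerProductSpace 𝕜 H₁] [CompleteSpace H₁]
    {T T' : H →L[𝕜] K} {S : H →L[𝕜] H₁} {R : H₁ →L[𝕜] H₁}
    (h : (adjoint T).comp T' = (adjoint S).comp (R.comp S)) (ξ ζ : H) :
    ⟪T ξ, T' ζ⟫_𝕜 = ⟪S ξ, R (S ζ)⟫_𝕜 := by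
  rw [← adjoint_inner_right, ← adjoint_inner_right S, ← comp_apply, h]
  rfl

theorem stmt9_general {A M H K H₁ : Type*}
    [NormedRing A] [StarRing A] [CStarRing A] [NormedAlgebra ℂ A] [StarModule ℂ A]
    [CompleteSpace A]
    [NormedAddCommGroup M] [NormedSpace ℂ M]
    [NormedAddCommGroup H] [InnerProductSpace ℂ H] [CompleteSpace H]
    [NormedAddCommGroup K] [InnerProductSpace ℂ K] [CompleteSpace K]
    [NormedAddCommGroup H₁] [InnerProductSpace ℂ H₁] [CompleteSpace H₁]
    (inner_ : M → M → A) (ract : M → A → M)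
    -- Hilbert module axioms used
    (hract_inner : ∀ (x y : M) (a b : A),
      inner_ (ract x a) (ract y b) = star a * inner_ x y * b)
    (hract_add : ∀ (x y : M) (a : A), ract (x + y) a = ract x a + ract y a)
    (hract_smul : ∀ (c : ℂ) (x : M) (a : A), ract (c • x) a = c • ract x a)
    (hnorm : ∀ x : M, ‖x‖ ^ 2 = ‖inner_ x x‖)
    (φ : A →ₗ[ℂ] (H →L[ℂ] H))
    (Φ : M → (H →L[ℂ] K))
    (hΦadd : ∀ x y : M, Φ (x + y) = Φ x + Φ y)
    (hΦsmul : ∀ (c : ℂ) (x : M), Φ (c • x) = c • Φ x)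
    (hΦ : ∀ x y : M, (adjoint (Φ x)).comp (Φ y) = φ (inner_ x y))
    (π : A →⋆ₐ[ℂ] (H₁ →L[ℂ] H₁)) (S : H →L[ℂ] H₁)
    (hdil : ∀ a : A, φ a = (adjoint S).comp ((π a).comp S))
    (hmin : (Submodule.span ℂ
      {v : H₁ | ∃ (a : A) (ξ : H), v = π a (S ξ)}).topologicalClosure = ⊤) :
    ∃ P : M →L[ℂ] (H₁ →L[ℂ] K),
      (∀ (x : M) (a : A) (ξ : H), P x (π a (S ξ)) = Φ (ract x a) ξ) ∧
      (∀ Q : M →L[ℂ] (H₁ →L[ℂ] K),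
        (∀ (x : M) (a : A) (ξ : H), Q x (π a (S ξ)) = Φ (ract x a) ξ) → Q = P) ∧
      ∀ x : M, ∀ η ∈ Submodule.span ℂ {v : H₁ | ∃ (a : A) (ξ : H), v = π a (S ξ)},
        ‖P x η‖ ^ 2 ≤ ‖π (inner_ x x)‖ * ‖η‖ ^ 2 := by
  let _ : CStarAlgebra A := { ‹NormedRing A›, ‹StarRing A›, ‹CStarRing A›, ‹NormedAlgebra ℂ A›,
    ‹StarModule ℂ A›, ‹CompleteSpace A› with }
  set V := {v : H₁ | ∃ (a : A) (ξ : H), v = π a (S ξ)}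
  let v : A × H → H₁ := fun p => π p.1 (S p.2)
  let e := Finsupp.linearCombination ℂ v
  have hrange : LinearMap.range e = Submodule.span ℂ V := by
    rw [Finsupp.range_linearCombination]
    congr 1
    ext
    simp [v, V, eq_comm]
  have hdense : Dense (Submodule.span ℂ V : Set H₁) :=
    Submodule.dense_iff_topologicalClosure_eq_top.mpr hmin
  have he : DenseRange e := by
    rw [DenseRange, ← LinearMap.coe_range, hrange]
    exact hdense
  let u : M →ₗ[ℂ] (A × H → K) :=
    { toFun := fun x p => Φ (ract x p.1) p.2
      map_add' := fun x y => by ext p; simp [hract_add, hΦadd]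
      map_smul' := fun c x => by ext p; simp [hract_smul, hΦsmul] }
  let F := (Finsupp.llift K ℂ ℂ (A × H)).toLinearMap ∘ₗ u
  have hgram (x : M) (i j : A × H) : ⟪u x i, u x j⟫_ℂ = ⟪v i, π (inner_ x x) (v j)⟫_ℂ := by
    change ⟪Φ (ract x i.1) i.2, Φ (ract x j.1) j.2⟫_ℂ = ⟪π i.1 (S i.2), _⟫_ℂ
    rw [inner_apply_eq_of_adjoint_comp_eq ((hΦ _ _).trans (hdil _)), hract_inner, map_mul,
      map_mul, map_star, star_eq_adjoint, mul_apply_eq_comp,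
      mul_apply_eq_comp, adjoint_inner_right]
  have hsq (x : M) (w : A × H →₀ ℂ) : ‖F x w‖ ^ 2 ≤ ‖π (inner_ x x)‖ * ‖e w‖ ^ 2 :=
    norm_sq_le_of_inner_self_eq (inner_linearCombination_eq_of_inner_eq (hgram x) w w)
  have hbound (x : M) (w : A × H →₀ ℂ) : ‖F x w‖ ≤ 1 * ‖x‖ * ‖e w‖ := by
    rw [one_mul, ← pow_le_pow_iff_left₀ (norm_nonneg _) (by positivity) two_ne_zero, mul_pow,
      hnorm]
    exact (hsq x w).trans (by gcongr; exact NonUnitalStarAlgHom.norm_apply_le π _)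
  obtain ⟨P, hP⟩ := F.exists_continuous_extend_of_norm_le he zero_le_one hbound
  have hPv (x : M) (a : A) (ξ : H) : P x (π a (S ξ)) = Φ (ract x a) ξ := by
    simpa [e, F, u] using hP x (Finsupp.single (a, ξ) 1)
  refine ⟨P, hPv, fun Q hQ => ?_, ?_⟩
  · ext x : 1
    refine ContinuousLinearMap.ext_on hdense ?_
    rintro _ ⟨a, ξ, rfl⟩
    rw [hQ, hPv]
  · rintro x _ hη
    obtain ⟨w, rfl⟩ := hrange ▸ hη
    rw [hP]
    exact hsq x w

/-- Given a `φ`-completely positive map `Φ : M → L(H,K)` on a Hilbert `A`-module `M`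
(`Φ(x)*Φ(y) = φ(⟨x,y⟩)`) and the minimal Stinespring dilation `(π, H₁, S)` of `φ`, there
is a unique continuous linear map `P : M → L(H₁, K)` with `P(x)(π(a)Sξ) = Φ(xa)ξ`, and it
satisfies `‖P(x)η‖² ≤ ‖π(⟨x,x⟩)‖ ‖η‖²` for `η` in the span of `π(A)SH`. -/
theorem stmt9 {A M H K H₁ : Type*}
    [NormedRing A] [StarRing A] [CStarRing A] [NormedAlgebra ℂ A] [StarModule ℂ A]
    [CompleteSpace A]
    [NormedAddCommGroup M] [NormedSpace ℂ M]
    [NormedAddCommGroup H] [InnerProductSpace ℂ H] [CompleteSpace H]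
    [NormedAddCommGroup K] [InnerProductSpace ℂ K] [CompleteSpace K]
    [NormedAddCommGroup H₁] [InnerProductSpace ℂ H₁] [CompleteSpace H₁]
    (inner_ : M → M → A) (ract : M → A → M)
    -- Hilbert module axioms used
    (hract_inner : ∀ (x y : M) (a b : A),
      inner_ (ract x a) (ract y b) = star a * inner_ x y * b)
    (hract_one : ∀ x : M, ract x 1 = x)
    (hract_add : ∀ (x y : M) (a : A), ract (x + y) a = ract x a + ract y a)
    (hract_smul : ∀ (c : ℂ) (x : M) (a : A), ract (c • x) a = c • ract x a)
    (hnorm : ∀ x : M, ‖x‖ ^ 2 = ‖inner_ x x‖)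
    (φ : A →ₗ[ℂ] (H →L[ℂ] H)) (hφ : IsCPFun fun a => φ a)
    (Φ : M → (H →L[ℂ] K))
    (hΦadd : ∀ x y : M, Φ (x + y) = Φ x + Φ y)
    (hΦsmul : ∀ (c : ℂ) (x : M), Φ (c • x) = c • Φ x)
    (hΦ : ∀ x y : M, (adjoint (Φ x)).comp (Φ y) = φ (inner_ x y))
    (π : A →⋆ₐ[ℂ] (H₁ →L[ℂ] H₁)) (S : H →L[ℂ] H₁)
    (hdil : ∀ a : A, φ a = (adjoint S).comp ((π a).comp S))
    (hmin : (Submodule.span ℂ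
      {v : H₁ | ∃ (a : A) (ξ : H), v = π a (S ξ)}).topologicalClosure = ⊤) :
    ∃ P : M →L[ℂ] (H₁ →L[ℂ] K),
      (∀ (x : M) (a : A) (ξ : H), P x (π a (S ξ)) = Φ (ract x a) ξ) ∧
      (∀ Q : M →L[ℂ] (H₁ →L[ℂ] K),
        (∀ (x : M) (a : A) (ξ : H), Q x (π a (S ξ)) = Φ (ract x a) ξ) → Q = P) ∧
      ∀ x : M, ∀ η ∈ Submodule.span ℂ {v : H₁ | ∃ (a : A) (ξ : H), v = π a (S ξ)},
        ‖P x η‖ ^ 2 ≤ ‖π (inner_ x x)‖ * ‖η‖ ^ 2 :=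
  stmt9_general inner_ ract hract_inner hract_add hract_smul hnorm φ Φ hΦadd hΦsmul hΦ π S hdil hmin
end
end

section
/- Radon–Nikodym theorem for completely positive maps: let A be a unital C*-algebra, H a Hilbert space, and φ, ψ : A → L(H) completely positive maps with ψ ≤ φ (φ − ψ completely positive). Let (π, H^φ, S) be the minimal Stinespring dilation of φ. Then there exists a unique positive operator Δ ∈ π(A)' with 0 ≤ Δ ≤ I such that ψ(a) = S* Δ π(a) S for all a ∈ A. -/
/-!
Complete positivity of `ψ` makes `⟪∑ aᵢ ⊗ ξᵢ, ∑ bⱼ ⊗ ηⱼ⟫ := ∑ ⟪ξᵢ, ψ (aᵢ⋆ bⱼ) ηⱼ⟫` a positive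
semidefinite sesquilinear form; for `φ` it is the inner product of the vectors `∑ π(aᵢ) S ξᵢ`,
which are dense in `H₁` by minimality. Since `φ - ψ` is completely positive, Cauchy–Schwarz
bounds the `ψ`-form by the `φ`-form, so it descends to a bounded form on `H₁`, represented by an
operator `0 ≤ Δ ≤ 1`. Moving `a⋆` from the left argument to `a` in the right one makes `Δ`
commute with `π(A)`, and any `Δ'` with the stated properties reproduces the same form on a dense
subspace, whence uniqueness.
-/

open ContinuousLinearMap

noncomputable section

open scoped ComplexOrder InnerProductSpace

theorem Finsupp.sesqForm_ext {R α β M : Type*} [CommSemiring R] {σ : R →+* R}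
    [AddCommMonoid M] [Module R M] {b b' : (α →₀ R) →ₛₗ[σ] (β →₀ R) →ₗ[R] M}
    (h : ∀ p q, b (single p 1) (single q 1) = b' (single p 1) (single q 1)) : b = b' :=
  lhom_ext' fun p => LinearMap.ext_ring <| lhom_ext' fun q => LinearMap.ext_ring (h p q)

section DenseRange

variable {𝕜 V E : Type*} [RCLike 𝕜] [NormedAddCommGroup E] [InnerProductSpace 𝕜 E]

theorem ext_inner_left_of_denseRange {P : V → E} (hP : DenseRange P) {u v : E}
    (h : ∀ x, ⟪P x, u⟫_𝕜 = ⟪P x, v⟫_𝕜) : u = v :=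
  ext_inner_left 𝕜 <| congrFun <|
    hP.equalizer (continuous_id.inner continuous_const) (continuous_id.inner continuous_const)
      (funext h)

theorem ContinuousLinearMap.ext_of_inner_denseRange {P : V → E} (hP : DenseRange P)
    {T T' : E →L[𝕜] E} (h : ∀ x y, ⟪P x, T (P y)⟫_𝕜 = ⟪P x, T' (P y)⟫_𝕜) : T = T' :=
  DFunLike.coe_injective <| hP.equalizer T.continuous T'.continuous <|
    funext fun y => ext_inner_left_of_denseRange hP fun x => h x y

variable [CompleteSpace E]

theorem ContinuousLinearMap.isSelfAdjoint_of_denseRange {P : V → E} (hP : DenseRange P)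
    {T : E →L[𝕜] E} (h : ∀ x y, ⟪T (P x), P y⟫_𝕜 = ⟪P x, T (P y)⟫_𝕜) : IsSelfAdjoint T :=
  ContinuousLinearMap.ext_of_inner_denseRange hP fun x y => by
    rw [star_eq_adjoint, adjoint_inner_right, h]

theorem ContinuousLinearMap.isPositive_of_denseRange {P : V → E} (hP : DenseRange P)
    {T : E →L[𝕜] E} (hT : IsSelfAdjoint T) (h : ∀ x, 0 ≤ RCLike.re ⟪P x, T (P x)⟫_𝕜) :
    T.IsPositive := by
  refine ⟨hT.isSymmetric, fun u => ?_⟩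
  rw [reApplyInnerSelf_apply]
  refine hP.induction_on u (isClosed_le continuous_const (by fun_prop)) fun x => ?_
  rw [show ⟪T (P x), P x⟫_𝕜 = ⟪P x, T (P x)⟫_𝕜 from hT.isSymmetric _ _]
  exact h x

variable [AddCommGroup V] [Module 𝕜 V]

theorem exists_inner_apply_eq_of_norm_le {P : V →ₗ[𝕜] E} (hP : DenseRange P)
    (b : V →ₗ⋆[𝕜] V →ₗ[𝕜] 𝕜) (hb : ∀ x y, ‖b x y‖ ≤ ‖P x‖ * ‖P y‖) :
    ∃ T : E →L[𝕜] E, ∀ x y, ⟪P x, T (P y)⟫_𝕜 = b x y := by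
  let u : V → E := fun x => (InnerProductSpace.toDual 𝕜 E).symm ((b x).extendOfNorm P)
  have hu : ∀ x y, ⟪P y, u x⟫_𝕜 = starRingEnd 𝕜 (b x y) := fun x y => by
    rw [← inner_conj_symm, InnerProductSpace.toDual_symm_apply,
      LinearMap.extendOfNorm_eq hP ⟨_, hb x⟩]
  let U : V →ₗ[𝕜] E :=
    { toFun := u
      map_add' := fun x x' => ext_inner_left_of_denseRange (𝕜 := 𝕜) hP fun y => by
        simp only [hu, inner_add_right, map_add, LinearMap.add_apply]
      map_smul' := fun c x => ext_inner_left_of_denseRange (𝕜 := 𝕜) hP fun y => by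
        simp only [hu, inner_smul_right, LinearMap.map_smulₛₗ, LinearMap.smul_apply, smul_eq_mul,
          map_mul, RCLike.conj_conj, RingHom.id_apply] }
  have hU : ∀ x, ‖U x‖ ≤ 1 * ‖P x‖ := fun x => by
    rw [one_mul]
    exact ((InnerProductSpace.toDual 𝕜 E).symm.norm_map _).trans_le
      (LinearMap.opNorm_extendOfNorm_le hP (norm_nonneg _) (hb x))
  refine ⟨adjoint (U.extendOfNorm P), fun x y => ?_⟩
  rw [adjoint_inner_right, LinearMap.extendOfNorm_eq hP ⟨1, hU⟩, ← inner_conj_symm]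
  exact (congrArg _ (hu x y)).trans (RCLike.conj_conj _)

end DenseRange

section CompletelyPositive

variable {A H : Type*} [Ring A] [StarRing A]
  [NormedAddCommGroup H] [InnerProductSpace ℂ H] [CompleteSpace H]

theorem isPosMat_of_star_mul (n : ℕ) (a : Fin n → A) :
    IsPosMat (Matrix.of fun i j => star (a i) * a j) := by
  cases n with
  | zero => exact ⟨0, Subsingleton.elim _ _⟩
  | succ n =>
    refine ⟨Matrix.of fun i j => if i = 0 then a j else 0, ?_⟩
    ext i j
    simp [Matrix.mul_apply]

theorem IsPosMat.sum_inner_nonneg {n : ℕ} {M : Matrix (Fin n) (Fin n) (H →L[ℂ] H)}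
    (hM : IsPosMat M) (ξ : Fin n → H) : 0 ≤ ∑ i, ∑ j, ⟪ξ i, M i j (ξ j)⟫_ℂ := by
  obtain ⟨C, rfl⟩ := hM
  calc (0 : ℂ) ≤ ∑ k, ⟪∑ i, C k i (ξ i), ∑ j, C k j (ξ j)⟫_ℂ :=
        Finset.sum_nonneg fun k _ => by rw [inner_self_eq_norm_sq_to_K]; positivity
    _ = ∑ i, ∑ j, ⟪ξ i, (C.conjTranspose * C) i j (ξ j)⟫_ℂ := by
        simp only [Matrix.mul_apply, Matrix.conjTranspose_apply, star_eq_adjoint, mul_def,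
          sum_apply, comp_apply, inner_sum, sum_inner, adjoint_inner_right]
        exact (Finset.sum_congr rfl fun _ _ => Finset.sum_comm).trans <|
          Finset.sum_comm.trans (Finset.sum_congr rfl fun _ _ => Finset.sum_comm)

theorem IsCPFun.sum_inner_nonneg {f : A → (H →L[ℂ] H)} (hf : IsCPFun f)
    {ι : Type*} [Fintype ι] (a : ι → A) (ξ : ι → H) :
    0 ≤ ∑ i, ∑ j, ⟪ξ i, f (star (a i) * a j) (ξ j)⟫_ℂ := by
  let e := (Fintype.equivFin ι).symm
  rw [← e.sum_comp]
  simp_rw [← e.sum_comp]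
  exact (hf _ _ (isPosMat_of_star_mul _ (a ∘ e))).sum_inner_nonneg (ξ ∘ e)

end CompletelyPositive

section CPForm

variable {A H : Type*} [Ring A] [StarRing A]
  [NormedAddCommGroup H] [InnerProductSpace ℂ H]

def cpKernel (f : A → (H →L[ℂ] H)) (p q : A × H) : ℂ := ⟪p.2, f (star p.1 * q.1) q.2⟫_ℂ

/-- `(A × H) →₀ ℂ` stands in for the algebraic tensor product `A ⊗ H`, and `cpForm f` is the
semi-inner product of the Stinespring construction for `f`. -/
def cpForm (f : A → (H →L[ℂ] H)) : ((A × H) →₀ ℂ) →ₗ⋆[ℂ] ((A × H) →₀ ℂ) →ₗ[ℂ] ℂ :=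
  Finsupp.lsum ℂ fun p => LinearMap.toSpanSingleton ℂ _
    (Finsupp.linearCombination ℂ (cpKernel f p)) ∘ₛₗ (starLinearEquiv ℂ : ℂ ≃ₗ⋆[ℂ] ℂ).toLinearMap

variable {f g : A → (H →L[ℂ] H)}

theorem cpForm_apply (x y : (A × H) →₀ ℂ) :
    cpForm f x y = x.sum fun p c => y.sum fun q d => starRingEnd ℂ c * d * cpKernel f p q := by
  simp only [cpForm, Finsupp.lsum_apply, LinearMap.sum_apply, Finsupp.sum,
    LinearMap.comp_apply, LinearMap.toSpanSingleton_apply, LinearEquiv.coe_coe,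
    starLinearEquiv_apply, RCLike.star_def, LinearMap.smul_apply, Finsupp.linearCombination_apply,
    smul_eq_mul, Finset.mul_sum]
  exact Finset.sum_congr rfl fun p _ => Finset.sum_congr rfl fun q _ => by ring

theorem cpForm_single (p q : A × H) (c d : ℂ) :
    cpForm f (Finsupp.single p c) (Finsupp.single q d) =
      starRingEnd ℂ c * d * cpKernel f p q := by
  simp [cpForm_apply]

theorem cpForm_sub : cpForm (f - g) = cpForm f - cpForm g :=
  Finsupp.sesqForm_ext fun p q => by
    simp [cpForm_single, cpKernel]

def mulLeftFst (c : A) : ((A × H) →₀ ℂ) →ₗ[ℂ] (A × H) →₀ ℂ :=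
  Finsupp.lmapDomain ℂ ℂ fun p => (c * p.1, p.2)

theorem cpForm_mulLeftFst_star (c : A) (x y : (A × H) →₀ ℂ) :
    cpForm f (mulLeftFst (star c) x) y = cpForm f x (mulLeftFst c y) := by
  have h : cpForm f ∘ₛₗ mulLeftFst (star c) = (cpForm f).compl₂ (mulLeftFst c) :=
    Finsupp.sesqForm_ext fun p q => by simp [mulLeftFst, cpForm_single, cpKernel, mul_assoc]
  exact LinearMap.congr_fun₂ h x y

variable [CompleteSpace H]

theorem cpForm_self_nonneg (hf : IsCPFun f) (x : (A × H) →₀ ℂ) : 0 ≤ cpForm f x x := by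
  have h := hf.sum_inner_nonneg (fun p : x.support => p.1.1) (fun p => x p • p.1.2)
  simp only [inner_smul_left, inner_smul_right, map_smul] at h
  rw [cpForm_apply]
  convert h using 1
  simp only [Finsupp.sum, ← Finset.sum_coe_sort x.support, cpKernel]
  exact Finset.sum_congr rfl fun p _ => Finset.sum_congr rfl fun q _ => by ring

theorem re_cpForm_self_nonneg (hf : IsCPFun f) (x : (A × H) →₀ ℂ) : 0 ≤ (cpForm f x x).re :=
  (Complex.nonneg_iff.1 (cpForm_self_nonneg hf x)).1

theorem cpForm_self_im_eq_zero (hf : IsCPFun f) (x : (A × H) →₀ ℂ) : (cpForm f x x).im = 0 :=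
  (Complex.nonneg_iff.1 (cpForm_self_nonneg hf x)).2.symm

theorem cpForm_conj_symm (hf : IsCPFun f) (x y : (A × H) →₀ ℂ) :
    starRingEnd ℂ (cpForm f y x) = cpForm f x y := by
  -- polarization: a sesquilinear form with real diagonal is Hermitian
  have hx := cpForm_self_im_eq_zero hf x
  have hy := cpForm_self_im_eq_zero hf y
  have hxy := cpForm_self_im_eq_zero hf (x + y)
  have hxIy := cpForm_self_im_eq_zero hf (x + Complex.I • y)
  simp only [map_add, LinearMap.add_apply, LinearMap.map_smulₛₗ, LinearMap.smul_apply,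
    map_smul, smul_eq_mul, Complex.conj_I, Complex.add_im, Complex.mul_im, Complex.neg_im,
    Complex.neg_re, Complex.I_re, Complex.I_im, Complex.mul_re, Complex.add_re] at hxy hxIy
  apply Complex.ext <;> simp only [Complex.conj_re, Complex.conj_im] <;> linarith

theorem norm_cpForm_sq_le (hf : IsCPFun f) (x y : (A × H) →₀ ℂ) :
    ‖cpForm f x y‖ ^ 2 ≤ (cpForm f x x).re * (cpForm f y y).re := by
  let core : PreInnerProductSpace.Core ℂ ((A × H) →₀ ℂ) :=
    { inner := fun x y => cpForm f x y
      conj_inner_symm := cpForm_conj_symm hf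
      re_inner_nonneg := re_cpForm_self_nonneg hf
      add_left := fun x x' y => by simp only [map_add, LinearMap.add_apply]
      smul_left := fun x y c => by simp only [LinearMap.map_smulₛₗ, LinearMap.smul_apply,
        smul_eq_mul] }
  have h : ‖cpForm f x y‖ * ‖cpForm f y x‖ ≤ (cpForm f x x).re * (cpForm f y y).re :=
    @InnerProductSpace.Core.inner_mul_inner_self_le ℂ _ _ _ _ core x y
  rwa [← cpForm_conj_symm hf y x, RCLike.norm_conj, ← sq] at h

theorem re_cpForm_self_le (hfg : IsCPFun (f - g)) (x : (A × H) →₀ ℂ) :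
    (cpForm g x x).re ≤ (cpForm f x x).re := by
  have h := re_cpForm_self_nonneg hfg x
  rwa [cpForm_sub, LinearMap.sub_apply, LinearMap.sub_apply, Complex.sub_re, sub_nonneg] at h

theorem norm_cpForm_sq_le_of_sub (hg : IsCPFun g) (hfg : IsCPFun (f - g))
    (x y : (A × H) →₀ ℂ) :
    ‖cpForm g x y‖ ^ 2 ≤ (cpForm f x x).re * (cpForm f y y).re :=
  (norm_cpForm_sq_le hg x y).trans <| mul_le_mul (re_cpForm_self_le hfg x)
    (re_cpForm_self_le hfg y) (re_cpForm_self_nonneg hg y)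
    ((re_cpForm_self_nonneg hg x).trans (re_cpForm_self_le hfg x))

end CPForm

section Dilation

variable {A H H₁ : Type*} [Ring A] [StarRing A] [Algebra ℂ A]
  [NormedAddCommGroup H] [InnerProductSpace ℂ H]
  [NormedAddCommGroup H₁] [InnerProductSpace ℂ H₁] [CompleteSpace H₁]
  {π : A →⋆ₐ[ℂ] (H₁ →L[ℂ] H₁)} {S : H →L[ℂ] H₁}

variable (π S) in
def dilationMap : ((A × H) →₀ ℂ) →ₗ[ℂ] H₁ :=
  Finsupp.linearCombination ℂ fun p => π p.1 (S p.2)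

theorem dilationMap_single (p : A × H) :
    dilationMap π S (Finsupp.single p 1) = π p.1 (S p.2) := by
  simp [dilationMap]

theorem denseRange_dilationMap
    (hmin : (Submodule.span ℂ
      {v : H₁ | ∃ (a : A) (ξ : H), v = π a (S ξ)}).topologicalClosure = ⊤) :
    DenseRange (dilationMap π S) := by
  have hrange : LinearMap.range (dilationMap π S) =
      Submodule.span ℂ {v : H₁ | ∃ (a : A) (ξ : H), v = π a (S ξ)} := by
    rw [dilationMap, Finsupp.range_linearCombination]
    congr 1
    ext v
    simp [eq_comm]
  rw [DenseRange, ← LinearMap.coe_range, hrange]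
  exact Submodule.dense_iff_topologicalClosure_eq_top.2 hmin

theorem dilationMap_mulLeftFst (c : A) (x : (A × H) →₀ ℂ) :
    dilationMap π S (mulLeftFst c x) = π c (dilationMap π S x) := by
  have h : dilationMap π S ∘ₗ mulLeftFst c = (π c : H₁ →ₗ[ℂ] H₁) ∘ₗ dilationMap π S :=
    Finsupp.lhom_ext fun p d => by simp [dilationMap, mulLeftFst]
  exact LinearMap.congr_fun h x

theorem adjoint_map_eq_map_star (a : A) : adjoint (π a) = π (star a) := by
  rw [map_star, star_eq_adjoint]

theorem commute_of_inner_dilationMap_eq_cpForm (hP : DenseRange (dilationMap π S))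
    {ψ : A → (H →L[ℂ] H)} {T : H₁ →L[ℂ] H₁}
    (hT : ∀ x y, ⟪dilationMap π S x, T (dilationMap π S y)⟫_ℂ = cpForm ψ x y) (a : A) :
    T.comp (π a) = (π a).comp T :=
  ext_of_inner_denseRange hP fun x y => by
    rw [comp_apply, comp_apply, ← dilationMap_mulLeftFst, hT, ← cpForm_mulLeftFst_star, ← hT,
      dilationMap_mulLeftFst, ← adjoint_map_eq_map_star, adjoint_inner_left]

variable [CompleteSpace H]

theorem inner_dilationMap_eq_cpForm {ψ : A → (H →L[ℂ] H)} {T : H₁ →L[ℂ] H₁}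
    (hcomm : ∀ a, T.comp (π a) = (π a).comp T)
    (hψ : ∀ a, ψ a = (adjoint S).comp (T.comp ((π a).comp S))) (x y : (A × H) →₀ ℂ) :
    ⟪dilationMap π S x, T (dilationMap π S y)⟫_ℂ = cpForm ψ x y := by
  have h : (innerₛₗ ℂ ∘ₛₗ dilationMap π S).compl₂ ((T : H₁ →ₗ[ℂ] H₁) ∘ₗ dilationMap π S) =
      cpForm ψ := Finsupp.sesqForm_ext fun p q => by
    simp only [LinearMap.compl₂_apply, LinearMap.comp_apply, innerₛₗ_apply_apply, coe_coe,
      dilationMap_single, cpForm_single, map_one, one_mul, cpKernel, hψ, comp_apply,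
      adjoint_inner_right]
    rw [← adjoint_inner_right, adjoint_map_eq_map_star, ← comp_apply (π _) T, ← hcomm,
      comp_apply, map_mul]
    rfl
  exact LinearMap.congr_fun₂ h x y

theorem eq_adjoint_comp_of_inner_dilationMap_eq_cpForm {ψ : A → (H →L[ℂ] H)} {T : H₁ →L[ℂ] H₁}
    (hT : ∀ x y, ⟪dilationMap π S x, T (dilationMap π S y)⟫_ℂ = cpForm ψ x y) (a : A) :
    ψ a = (adjoint S).comp (T.comp ((π a).comp S)) := by
  ext ξ
  refine ext_inner_left ℂ fun η => ?_
  have h := hT (Finsupp.single (1, η) 1) (Finsupp.single (a, ξ) 1)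
  simp only [dilationMap_single, cpForm_single, cpKernel, map_one, one_apply_eq_self,
    star_one, one_mul] at h
  rw [comp_apply, comp_apply, comp_apply, adjoint_inner_right, h]

theorem cpForm_eq_inner_dilationMap {φ : A → (H →L[ℂ] H)}
    (hdil : ∀ a, φ a = (adjoint S).comp ((π a).comp S)) (x y : (A × H) →₀ ℂ) :
    cpForm φ x y = ⟪dilationMap π S x, dilationMap π S y⟫_ℂ :=
  (inner_dilationMap_eq_cpForm (T := 1) (fun _ => rfl) (fun a => (hdil a).trans rfl) x y).symm

theorem re_cpForm_self_le_norm_sq {φ ψ : A → (H →L[ℂ] H)} (hle : IsCPFun (φ - ψ))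
    (hdil : ∀ a, φ a = (adjoint S).comp ((π a).comp S)) (x : (A × H) →₀ ℂ) :
    (cpForm ψ x x).re ≤ ‖dilationMap π S x‖ ^ 2 := by
  simpa [cpForm_eq_inner_dilationMap hdil, inner_self_eq_norm_sq_to_K, ← Complex.ofReal_pow] using
    re_cpForm_self_le hle x

theorem norm_cpForm_le_of_dilation {φ ψ : A → (H →L[ℂ] H)} (hψ : IsCPFun ψ)
    (hle : IsCPFun (φ - ψ)) (hdil : ∀ a, φ a = (adjoint S).comp ((π a).comp S))
    (x y : (A × H) →₀ ℂ) :
    ‖cpForm ψ x y‖ ≤ ‖dilationMap π S x‖ * ‖dilationMap π S y‖ := by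
  refine (pow_le_pow_iff_left₀ (norm_nonneg _) (by positivity) two_ne_zero).1 ?_
  calc ‖cpForm ψ x y‖ ^ 2 ≤ (cpForm φ x x).re * (cpForm φ y y).re :=
        norm_cpForm_sq_le_of_sub hψ hle x y
    _ = (‖dilationMap π S x‖ * ‖dilationMap π S y‖) ^ 2 := by
        simp [cpForm_eq_inner_dilationMap hdil, inner_self_eq_norm_sq_to_K, ← Complex.ofReal_pow,
          mul_pow]

end Dilation

theorem stmt12_general {A H H₁ : Type*}
    [NormedRing A] [StarRing A] [NormedAlgebra ℂ A]
    [NormedAddCommGroup H] [InnerProductSpace ℂ H] [CompleteSpace H]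
    [NormedAddCommGroup H₁] [InnerProductSpace ℂ H₁] [CompleteSpace H₁]
    (φ ψ : A →ₗ[ℂ] (H →L[ℂ] H))
    (hψ : IsCPFun fun a => ψ a)
    (hle : IsCPFun fun a => φ a - ψ a)
    (π : A →⋆ₐ[ℂ] (H₁ →L[ℂ] H₁)) (S : H →L[ℂ] H₁)
    (hdil : ∀ a : A, φ a = (adjoint S).comp ((π a).comp S))
    (hmin : (Submodule.span ℂ
      {v : H₁ | ∃ (a : A) (ξ : H), v = π a (S ξ)}).topologicalClosure = ⊤) :
    ∃! Δ : H₁ →L[ℂ] H₁,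
      Δ.IsPositive ∧ (1 - Δ).IsPositive ∧
      (∀ a : A, Δ.comp (π a) = (π a).comp Δ) ∧
      ∀ a : A, ψ a = (adjoint S).comp (Δ.comp ((π a).comp S)) := by
  have hP := denseRange_dilationMap hmin
  obtain ⟨Δ, hΔ⟩ := exists_inner_apply_eq_of_norm_le hP (cpForm ψ)
    (norm_cpForm_le_of_dilation (φ := φ) hψ hle hdil)
  have hsa : IsSelfAdjoint Δ := isSelfAdjoint_of_denseRange hP fun x y => by
    rw [← inner_conj_symm, hΔ, cpForm_conj_symm hψ, hΔ]
  have hpos : Δ.IsPositive := isPositive_of_denseRange hP hsa fun x => by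
    rw [hΔ]
    exact re_cpForm_self_nonneg hψ x
  have hpos' : (1 - Δ).IsPositive :=
    isPositive_of_denseRange hP ((IsSelfAdjoint.one _).sub hsa) fun x => by
      rw [sub_apply, one_apply_eq_self, inner_sub_right, hΔ, map_sub, inner_self_eq_norm_sq,
        sub_nonneg]
      exact re_cpForm_self_le_norm_sq (φ := φ) hle hdil x
  refine ⟨Δ, ⟨hpos, hpos', commute_of_inner_dilationMap_eq_cpForm hP hΔ,
    eq_adjoint_comp_of_inner_dilationMap_eq_cpForm hΔ⟩, ?_⟩
  rintro Δ' ⟨-, -, hcomm, hψΔ'⟩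
  exact ext_of_inner_denseRange hP fun x y => by
    rw [inner_dilationMap_eq_cpForm hcomm hψΔ', hΔ]

/-- Radon–Nikodym theorem for completely positive maps: if `ψ ≤ φ` (i.e. `φ - ψ` is
completely positive) and `(π, H₁, S)` is the minimal Stinespring dilation of `φ`, then
there is a unique positive `Δ` in the commutant of `π(A)` with `0 ≤ Δ ≤ I` and
`ψ(a) = S* Δ π(a) S` for all `a`. -/
theorem stmt12 {A H H₁ : Type*}
    [NormedRing A] [StarRing A] [CStarRing A] [NormedAlgebra ℂ A] [StarModule ℂ A]
    [CompleteSpace A]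
    [NormedAddCommGroup H] [InnerProductSpace ℂ H] [CompleteSpace H]
    [NormedAddCommGroup H₁] [InnerProductSpace ℂ H₁] [CompleteSpace H₁]
    (φ ψ : A →ₗ[ℂ] (H →L[ℂ] H))
    (hφ : IsCPFun fun a => φ a) (hψ : IsCPFun fun a => ψ a)
    (hle : IsCPFun fun a => φ a - ψ a)
    (π : A →⋆ₐ[ℂ] (H₁ →L[ℂ] H₁)) (S : H →L[ℂ] H₁)
    (hdil : ∀ a : A, φ a = (adjoint S).comp ((π a).comp S))
    (hmin : (Submodule.span ℂ
      {v : H₁ | ∃ (a : A) (ξ : H), v = π a (S ξ)}).topologicalClosure = ⊤) :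
    ∃! Δ : H₁ →L[ℂ] H₁,
      Δ.IsPositive ∧ (1 - Δ).IsPositive ∧
      (∀ a : A, Δ.comp (π a) = (π a).comp Δ) ∧
      ∀ a : A, ψ a = (adjoint S).comp (Δ.comp ((π a).comp S)) :=
  stmt12_general φ ψ hψ hle π S hdil hmin
end
end
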